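/- arXiv:1108.4306 — 3 statements merged into one kernel-verified Lean document; each statement's English description precedes it below -/
import Mathlib

section
/- Let K ≥ 2 and β : Fin K → ℂ with ∑ j, |β j|² = 1. If |∑ j, β j|² < 1/(12K), then there exist two distinct indices j₁ ≠ j₂ with |β j₁|² ≥ 1/K⁴ and |β j₂|² ≥ 1/K⁴. -/
/-! Some index `j₀` carries at least the average mass `1/K`. If every other index had mass below
`1/K⁴`, i.e. modulus below `1/K²`, then by the triangle inequality
`‖∑ β‖ ≥ ‖β j₀‖ - (K-1)/K² ≥ t - t²` with `t = 1/√K ≤ 1/√2`, and `(t - t²)² ≥ t²/12 = 1/(12K)`. -/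

open Finset

lemma norm_sub_mul_le_norm_sum {ι E : Type*} [Fintype ι] [DecidableEq ι]
    [SeminormedAddCommGroup E] (v : ι → E) (i₀ : ι) {ε : ℝ} (hε : ∀ i ≠ i₀, ‖v i‖ ≤ ε) :
    ‖v i₀‖ - ((Fintype.card ι : ℝ) - 1) * ε ≤ ‖∑ i, v i‖ := by
  have hsplit : v i₀ = ∑ i, v i - ∑ i ∈ univ.erase i₀, v i := by
    rw [← add_sum_erase _ _ (mem_univ i₀), add_sub_cancel_right]
  have hrest : ∑ i ∈ univ.erase i₀, ‖v i‖ ≤ ((Fintype.card ι : ℝ) - 1) * ε := by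
    calc ∑ i ∈ univ.erase i₀, ‖v i‖ ≤ ∑ _i ∈ univ.erase i₀, ε :=
          sum_le_sum fun i hi => hε i (ne_of_mem_erase hi)
      _ = ((Fintype.card ι : ℝ) - 1) * ε := by
          rw [sum_const, card_erase_of_mem (mem_univ i₀), nsmul_eq_mul, card_univ,
            Nat.cast_pred (Fintype.card_pos_iff.mpr ⟨i₀⟩)]
  have htri : ‖v i₀‖ ≤ ‖∑ i, v i‖ + ‖∑ i ∈ univ.erase i₀, v i‖ := hsplit ▸ norm_sub_le _ _
  linarith [norm_sum_le (univ.erase i₀) v]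

lemma sq_div_twelve_le_sq_sub_sq {t : ℝ} (ht : t ^ 2 ≤ 1 / 2) : t ^ 2 / 12 ≤ (t - t ^ 2) ^ 2 := by
  -- `(3t - 2)² ≥ 0` reduces `(1 - t)² ≥ 1/12` to `t² ≤ 1/2`.
  nlinarith [mul_nonneg (sq_nonneg t) (sq_nonneg (3 * t - 2)),
    mul_nonneg (sq_nonneg t) (sub_nonneg.mpr ht)]

lemma div_twelve_le_sq_of_sub_le {u a x : ℝ} (hu : u ≤ 1 / 2) (hua : u ≤ a ^ 2) (ha : 0 ≤ a)
    (hx : a - u ≤ x) : u / 12 ≤ x ^ 2 := by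
  rcases le_or_gt u 0 with hu0 | hu0
  · nlinarith [sq_nonneg x]
  set t := √u
  have ht2 : t ^ 2 = u := Real.sq_sqrt hu0.le
  have hta : t ≤ a := by simpa [Real.sqrt_sq ha] using Real.sqrt_le_sqrt hua
  have ht1 : t ≤ 1 := by nlinarith [Real.sqrt_nonneg u]
  have hsub : 0 ≤ t - t ^ 2 := by nlinarith [Real.sqrt_nonneg u]
  calc u / 12 = t ^ 2 / 12 := by rw [ht2]
    _ ≤ (t - t ^ 2) ^ 2 := sq_div_twelve_le_sq_sub_sq (by linarith)
    _ ≤ x ^ 2 := pow_le_pow_left₀ hsub (by linarith) 2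

theorem stmt_1 (K : ℕ) (hK : 2 ≤ K) (β : Fin K → ℂ)
    (hnorm : ∑ j, ‖β j‖ ^ 2 = 1)
    (hsmall : ‖∑ j, β j‖ ^ 2 < 1 / (12 * (K : ℝ))) :
    ∃ j₁ j₂ : Fin K, j₁ ≠ j₂ ∧ ‖β j₁‖ ^ 2 ≥ 1 / (K : ℝ) ^ 4 ∧
      ‖β j₂‖ ^ 2 ≥ 1 / (K : ℝ) ^ 4 := by
  by_contra! hcon
  have hKr : (2 : ℝ) ≤ K := by exact_mod_cast hK
  have : Nonempty (Fin K) := ⟨⟨0, by omega⟩⟩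
  obtain ⟨j₀, -, hj₀⟩ : ∃ j₀ ∈ univ, 1 / (K : ℝ) ≤ ‖β j₀‖ ^ 2 :=
    exists_le_of_sum_le univ_nonempty (by simp [hnorm, (by positivity : (K : ℝ) ≠ 0)])
  have hK4 : (K : ℝ) ≤ K ^ 4 := by
    simpa using pow_le_pow_right₀ (by linarith : (1 : ℝ) ≤ K) (by norm_num : 1 ≤ 4)
  have hlarge : 1 / (K : ℝ) ^ 4 ≤ ‖β j₀‖ ^ 2 :=
    (one_div_le_one_div_of_le (by positivity) hK4).trans hj₀
  have hothers : ∀ j ≠ j₀, ‖β j‖ ≤ 1 / (K : ℝ) ^ 2 := fun j hj =>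
    le_of_pow_le_pow_left₀ two_ne_zero (by positivity)
      (by rw [div_pow, one_pow, ← pow_mul]; exact (hcon j₀ j hj.symm hlarge).le)
  have htri := norm_sub_mul_le_norm_sum β j₀ hothers
  rw [Fintype.card_fin] at htri
  have hx : ‖β j₀‖ - 1 / K ≤ ‖∑ j, β j‖ := by
    have : ((K : ℝ) - 1) * (1 / K ^ 2) ≤ 1 / K := by
      calc ((K : ℝ) - 1) * (1 / K ^ 2) ≤ K * (1 / K ^ 2) := by gcongr; linarith
        _ = 1 / (K : ℝ) := by field_simp
    linarith
  have hbound := div_twelve_le_sq_of_sub_le (by rw [div_le_div_iff₀] <;> linarith) hj₀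
    (norm_nonneg _) hx
  rw [div_div, mul_comm] at hbound
  linarith
end

section
/- Let K ≥ 2 and β : Fin K → ℂ with ∑ j, |β j|² = 1. If there is an index j₀ with |β j₀|² ≥ 1/K and |β j|² ≤ 1/K⁴ for all j ≠ j₀, then |∑ j, β j|² ≥ (1 - 1/√K)²/K. -/
/-!
The dominant amplitude has modulus at least `1/√K`, while the remaining `K - 1` amplitudes have
modulus at most `1/K²` each, so by the reverse triangle inequality
`|∑ j, β j| ≥ 1/√K - 1/K = (1 - 1/√K)/√K ≥ 0`; squaring gives the bound.
-/

open Finset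

theorem norm_sub_sum_norm_erase_le_norm_sum {ι E : Type*} [DecidableEq ι]
    [SeminormedAddCommGroup E]
    (s : Finset ι) (f : ι → E) {i : ι} (hi : i ∈ s) :
    ‖f i‖ - ∑ j ∈ s.erase i, ‖f j‖ ≤ ‖∑ j ∈ s, f j‖ := by
  rw [← add_sum_erase s f hi]
  calc ‖f i‖ - ∑ j ∈ s.erase i, ‖f j‖ ≤ ‖f i‖ - ‖∑ j ∈ s.erase i, f j‖ :=
        sub_le_sub_left (norm_sum_le _ _) _
    _ ≤ ‖f i + ∑ j ∈ s.erase i, f j‖ := norm_sub_le_norm_add _ _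

theorem norm_sub_card_mul_le_norm_sum {ι E : Type*} [Fintype ι] [SeminormedAddCommGroup E]
    (f : ι → E) (i : ι) {ε : ℝ} (hε : 0 ≤ ε) (hf : ∀ j, j ≠ i → ‖f j‖ ≤ ε) :
    ‖f i‖ - Fintype.card ι * ε ≤ ‖∑ j, f j‖ := by
  classical
  have htail : ∑ j ∈ univ.erase i, ‖f j‖ ≤ Fintype.card ι * ε :=
    calc ∑ j ∈ univ.erase i, ‖f j‖ ≤ (univ.erase i).card • ε :=
          sum_le_card_nsmul _ _ _ fun j hj => hf j (ne_of_mem_erase hj)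
      _ ≤ Fintype.card ι * ε := by
          rw [nsmul_eq_mul]
          gcongr
          exact card_erase_le
  linarith [norm_sub_sum_norm_erase_le_norm_sum univ f (mem_univ i)]

theorem one_sub_inv_sqrt_sq_div_le_sq {K x : ℝ} (hK : 1 ≤ K) (hx : 1 / √K - 1 / K ≤ x) :
    (1 - 1 / √K) ^ 2 / K ≤ x ^ 2 := by
  have hs : 1 ≤ √K := Real.one_le_sqrt.mpr hK
  have hK_eq : K = √K ^ 2 := (Real.sq_sqrt (by linarith)).symm
  set s := √K
  have hsquare : (1 - 1 / s) ^ 2 / K = (1 / s - 1 / K) ^ 2 := by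
    rw [hK_eq]
    field_simp
  have hnonneg : 0 ≤ 1 / s - 1 / K := by
    rw [hK_eq, sub_nonneg]
    gcongr
    nlinarith
  rw [hsquare]
  exact pow_le_pow_left₀ hnonneg hx 2

theorem stmt_2_general (K : ℕ) (β : Fin K → ℂ)
    (j₀ : Fin K)
    (hbig : ‖β j₀‖ ^ 2 ≥ 1 / (K : ℝ))
    (hsmall : ∀ j : Fin K, j ≠ j₀ → ‖β j‖ ^ 2 ≤ 1 / (K : ℝ) ^ 4) :
    ‖∑ j, β j‖ ^ 2 ≥ (1 - 1 / Real.sqrt K) ^ 2 / (K : ℝ) := by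
  have hK1 : (1 : ℝ) ≤ K := by exact_mod_cast j₀.pos
  have hdominant : 1 / √K ≤ ‖β j₀‖ := by
    refine le_of_sq_le_sq ?_ (norm_nonneg _)
    rwa [div_pow, one_pow, Real.sq_sqrt (by linarith)]
  have htail : ∀ j, j ≠ j₀ → ‖β j‖ ≤ 1 / (K : ℝ) ^ 2 := fun j hj => by
    refine le_of_sq_le_sq ?_ (by positivity)
    rw [div_pow, one_pow, ← pow_mul]
    exact hsmall j hj
  have hlower := norm_sub_card_mul_le_norm_sum β j₀ (by positivity) htail
  rw [Fintype.card_fin, mul_one_div, sq, ← div_div, div_self (by linarith)] at hlower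
  exact one_sub_inv_sqrt_sq_div_le_sq hK1 (by linarith)

theorem stmt_2 (K : ℕ) (hK : 2 ≤ K) (β : Fin K → ℂ)
    (hnorm : ∑ j, ‖β j‖ ^ 2 = 1) (j₀ : Fin K)
    (hbig : ‖β j₀‖ ^ 2 ≥ 1 / (K : ℝ))
    (hsmall : ∀ j : Fin K, j ≠ j₀ → ‖β j‖ ^ 2 ≤ 1 / (K : ℝ) ^ 4) :
    ‖∑ j, β j‖ ^ 2 ≥ (1 - 1 / Real.sqrt K) ^ 2 / (K : ℝ) :=
  stmt_2_general K β j₀ hbig hsmall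
end

section
/- Let P, Q : Fin n → ℝ be probability distributions arising as P i = |⟨e_i, Ψ⟩|² and Q i = |⟨e_i, Φ⟩|² for unit vectors Ψ, Φ and an orthonormal basis (e_i). Then (1/2) ∑ i |P i - Q i| ≤ √(1 - |⟨Ψ, Φ⟩|²). -/
/-!
Write `a i = |⟪e i, Ψ⟫|` and `b i = |⟪e i, Φ⟫|`, so that `P = a²`, `Q = b²` and `∑ a² = ∑ b² = 1`.
Factoring `a² - b² = (a - b)(a + b)` and applying Cauchy–Schwarz gives
`(∑ |P i - Q i|)² ≤ ∑ (a - b)² · ∑ (a + b)² = 4 (1 - F²)` with `F = ∑ a i b i` the classical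
fidelity, and expanding `⟪Ψ, Φ⟫` in the basis shows `|⟪Ψ, Φ⟫| ≤ F`.
-/

open Finset

theorem Finset.half_sum_abs_sq_sub_sq_le_sqrt {ι : Type*} (s : Finset ι) (a b : ι → ℝ)
    (ha : ∑ i ∈ s, a i ^ 2 = 1) (hb : ∑ i ∈ s, b i ^ 2 = 1) :
    1 / 2 * ∑ i ∈ s, |a i ^ 2 - b i ^ 2| ≤ √(1 - (∑ i ∈ s, a i * b i) ^ 2) := by
  set F := ∑ i ∈ s, a i * b i
  have hsub : ∑ i ∈ s, (a i - b i) ^ 2 = 2 - 2 * F := by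
    simp only [sub_sq, sum_add_distrib, sum_sub_distrib, ha, hb, mul_assoc, ← mul_sum, F]
    ring
  have hadd : ∑ i ∈ s, (a i + b i) ^ 2 = 2 + 2 * F := by
    simp only [add_sq, sum_add_distrib, ha, hb, mul_assoc, ← mul_sum, F]
    ring
  have hcs : (∑ i ∈ s, |a i ^ 2 - b i ^ 2|) ^ 2 ≤ 4 * (1 - F ^ 2) := by
    calc (∑ i ∈ s, |a i ^ 2 - b i ^ 2|) ^ 2
        = (∑ i ∈ s, |a i + b i| * |a i - b i|) ^ 2 := by simp only [sq_sub_sq, abs_mul]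
      _ ≤ (∑ i ∈ s, |a i + b i| ^ 2) * ∑ i ∈ s, |a i - b i| ^ 2 :=
          sum_mul_sq_le_sq_mul_sq _ _ _
      _ = 4 * (1 - F ^ 2) := by simp only [sq_abs, hsub, hadd]; ring
  apply Real.le_sqrt_of_sq_le
  rw [mul_pow]
  linarith

theorem OrthonormalBasis.norm_inner_le_sum_norm_inner_mul_norm_inner {ι 𝕜 E : Type*} [Fintype ι]
    [RCLike 𝕜] [NormedAddCommGroup E] [InnerProductSpace 𝕜 E] (e : OrthonormalBasis ι 𝕜 E)
    (x y : E) : ‖(inner 𝕜 x y : 𝕜)‖ ≤ ∑ i, ‖(inner 𝕜 (e i) x : 𝕜)‖ * ‖(inner 𝕜 (e i) y : 𝕜)‖ :=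
  calc ‖(inner 𝕜 x y : 𝕜)‖ = ‖∑ i, (inner 𝕜 x (e i) : 𝕜) * inner 𝕜 (e i) y‖ := by
        rw [e.sum_inner_mul_inner]
    _ ≤ ∑ i, ‖(inner 𝕜 x (e i) : 𝕜) * inner 𝕜 (e i) y‖ := norm_sum_le _ _
    _ = ∑ i, ‖(inner 𝕜 (e i) x : 𝕜)‖ * ‖(inner 𝕜 (e i) y : 𝕜)‖ := by
        simp only [norm_mul, norm_inner_symm]

theorem stmt_6 {n : ℕ} {E : Type*} [NormedAddCommGroup E] [InnerProductSpace ℂ E]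
    (e : OrthonormalBasis (Fin n) ℂ E) (Ψ Φ : E)
    (hΨ : ‖Ψ‖ = 1) (hΦ : ‖Φ‖ = 1)
    (P Q : Fin n → ℝ)
    (hP : ∀ i, P i = ‖(inner ℂ (e i) Ψ : ℂ)‖ ^ 2)
    (hQ : ∀ i, Q i = ‖(inner ℂ (e i) Φ : ℂ)‖ ^ 2) :
    (1 / 2) * ∑ i, |P i - Q i| ≤ Real.sqrt (1 - ‖(inner ℂ Ψ Φ : ℂ)‖ ^ 2) := by
  set a := fun i ↦ ‖(inner ℂ (e i) Ψ : ℂ)‖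
  set b := fun i ↦ ‖(inner ℂ (e i) Φ : ℂ)‖
  have ha : ∑ i, a i ^ 2 = 1 := by simp only [a, e.sum_sq_norm_inner_right, hΨ, one_pow]
  have hb : ∑ i, b i ^ 2 = 1 := by simp only [b, e.sum_sq_norm_inner_right, hΦ, one_pow]
  have hfid : ‖(inner ℂ Ψ Φ : ℂ)‖ ≤ ∑ i, a i * b i :=
    e.norm_inner_le_sum_norm_inner_mul_norm_inner Ψ Φ
  simp only [hP, hQ]
  calc 1 / 2 * ∑ i, |a i ^ 2 - b i ^ 2| ≤ √(1 - (∑ i, a i * b i) ^ 2) :=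
        univ.half_sum_abs_sq_sub_sq_le_sqrt a b ha hb
    _ ≤ √(1 - ‖(inner ℂ Ψ Φ : ℂ)‖ ^ 2) := by gcongr
end
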